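/- Let f : ℝ² → ℝ be a non-degenerate weighted homogeneous polynomial of type (d; w₁, w₂) with w₁ ≥ w₂. Then the Łojasiewicz exponent of f satisfies: L(f) = (d − w₁)/w₂ if the zero set of ∂f/∂x₁ (as a germ at the origin) is contained in the line {x₂ = 0}, and L(f) = d/w₂ − 1 otherwise. -/

import Mathlib

open MvPolynomial

/-- Euclidean norm of the gradient of a polynomial `f` at `x`. -/
noncomputable def gradNorm {n : ℕ} (f : MvPolynomial (Fin n) ℝ) (x : Fin n → ℝ) : ℝ :=
  Real.sqrt (∑ i, (eval x (pderiv i f)) ^ 2)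

/-- Euclidean norm on `Fin n → ℝ`. -/
noncomputable def eNorm {n : ℕ} (x : Fin n → ℝ) : ℝ :=
  Real.sqrt (∑ i, (x i) ^ 2)

/-- `f` is weighted homogeneous of type `(d; w)`: every monomial `x^α` appearing in `f`
satisfies `∑ i, α i * w i = d`. -/
def IsWeightedHomog {n : ℕ} (f : MvPolynomial (Fin n) ℝ) (w : Fin n → ℕ) (d : ℕ) : Prop :=
  ∀ α ∈ f.support, ∑ i, α i * w i = d

/-- `f` is non-degenerate (isolated singularity at the origin): in some neighborhood of `0`
the gradient of `f` vanishes only at the origin. -/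
def Nondeg {n : ℕ} (f : MvPolynomial (Fin n) ℝ) : Prop :=
  ∃ U ∈ nhds (0 : Fin n → ℝ), ∀ x ∈ U, (∀ i, eval x (pderiv i f) = 0) → x = 0

/-- The Łojasiewicz inequality `‖∇f(x)‖ ≥ C ‖x‖^lam` holds near `0` for some `C > 0`. -/
def LojIneq {n : ℕ} (f : MvPolynomial (Fin n) ℝ) (lam : ℝ) : Prop :=
  ∃ C > (0 : ℝ), ∃ U ∈ nhds (0 : Fin n → ℝ), ∀ x ∈ U, C * eNorm x ^ lam ≤ gradNorm f x

/-- The Łojasiewicz exponent of `f`: the infimum of all `lam > 0` for which the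
Łojasiewicz inequality holds near the origin. -/
noncomputable def lojExp {n : ℕ} (f : MvPolynomial (Fin n) ℝ) : ℝ :=
  sInf {lam : ℝ | 0 < lam ∧ LojIneq f lam}

/-- The weighted "radius" `ρ(x) = (∑ i |x i| ^ (2 / w i)) ^ (1/2)`. -/
noncomputable def rho {n : ℕ} (w : Fin n → ℕ) (x : Fin n → ℝ) : ℝ :=
  Real.sqrt (∑ i, |x i| ^ ((2 : ℝ) / (w i : ℝ)))

/-- The weighted norm of the gradient:
`‖grad_w f(x)‖_w = (∑ i ρ(x)^(2 wᵢ) |∂f/∂xᵢ(x)|²)^(1/2)`. -/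
noncomputable def wGradNorm {n : ℕ} (w : Fin n → ℕ) (f : MvPolynomial (Fin n) ℝ)
    (x : Fin n → ℝ) : ℝ :=
  Real.sqrt (∑ i, rho w x ^ (2 * w i) * (eval x (pderiv i f)) ^ 2)

/-!
Write `t • x = (t ^ w₁ x₁, t ^ w₂ x₂)` for the weighted dilation and `ρ` for the weighted radius:
every `x ≠ 0` is `ρ(x) • u` with `u` on the compact weighted sphere `ρ = 1`, and
`∂ᵢf(t • u) = t ^ (d - wᵢ) ∂ᵢf(u)`.

Lower bounds on the exponent come from the curves `t ↦ t • u`: if `‖∇f‖ ≤ K t ^ m` along such a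
curve while `‖t • u‖ ≥ |uⱼ| t ^ wⱼ`, then `m ≤ wⱼ λ`. The curve through `(0, 1)` gives
`(d - w₁) / w₂`; a zero of `∂₁f` off the line `x₂ = 0` gives `d / w₂ - 1`.

Upper bounds: by compactness `‖∇f(x)‖ ≥ c ρ(x) ^ (d - w₂)`, and `|xᵢ| ≤ ρ(x) ^ wᵢ`, which yields
`d / w₂ - 1` in general. If the zeros of `∂₁f` lie on `x₂ = 0`, then `∂₁f = x₂ ^ a R` with `R`
nonvanishing on the sphere, whence `|∂₁f(x)| ≥ c |x₂| ^ ((d - w₁) / w₂)`; the `x₁`-direction is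
controlled either because `d = w₁` (the exponent is then `0`) or because `d ≥ w₁ + w₂`, which makes
`ρ ^ (d - w₂) ≥ ρ ^ (w₁ (d - w₁) / w₂)` for `ρ ≤ 1`.
-/

open Filter Topology

variable {n : ℕ}

theorem abs_le_sqrt_sum_sq (a : Fin n → ℝ) (j : Fin n) : |a j| ≤ √(∑ i, a i ^ 2) := by
  rw [← Real.sqrt_sq_eq_abs]
  exact Real.sqrt_le_sqrt (Finset.single_le_sum (fun i _ => sq_nonneg (a i)) (Finset.mem_univ j))

theorem sqrt_sum_sq_le_sum_abs (a : Fin n → ℝ) : √(∑ i, a i ^ 2) ≤ ∑ i, |a i| := by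
  rw [Real.sqrt_le_left (Finset.sum_nonneg fun i _ => abs_nonneg (a i))]
  simp_rw [← sq_abs (a _)]
  exact Finset.sum_sq_le_sq_sum_of_nonneg fun i _ => abs_nonneg (a i)

theorem sqrt_sum_sq_le_card_mul {a : Fin n → ℝ} {M : ℝ} (h : ∀ i, |a i| ≤ M) :
    √(∑ i, a i ^ 2) ≤ n * M := by
  calc √(∑ i, a i ^ 2) ≤ ∑ i, |a i| := sqrt_sum_sq_le_sum_abs a
    _ ≤ ∑ _i : Fin n, M := Finset.sum_le_sum fun i _ => h i
    _ = n * M := by simp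

theorem abs_le_eNorm (x : Fin n → ℝ) (j : Fin n) : |x j| ≤ eNorm x := abs_le_sqrt_sum_sq x j

theorem continuous_eNorm : Continuous (eNorm : (Fin n → ℝ) → ℝ) := by
  unfold eNorm; fun_prop

theorem abs_eval_pderiv_le_gradNorm (f : MvPolynomial (Fin n) ℝ) (x : Fin n → ℝ) (j : Fin n) :
    |eval x (pderiv j f)| ≤ gradNorm f x :=
  abs_le_sqrt_sum_sq (fun i => eval x (pderiv i f)) j

theorem gradNorm_le_sum_abs (f : MvPolynomial (Fin n) ℝ) (x : Fin n → ℝ) :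
    gradNorm f x ≤ ∑ i, |eval x (pderiv i f)| :=
  sqrt_sum_sq_le_sum_abs _

theorem continuous_gradNorm (f : MvPolynomial (Fin n) ℝ) : Continuous (gradNorm f) := by
  unfold gradNorm
  exact (continuous_finsetSum _ fun i _ => (continuous_eval _).pow 2).sqrt

noncomputable def weightedScale (w : Fin n → ℕ) (t : ℝ) (x : Fin n → ℝ) : Fin n → ℝ :=
  fun i => t ^ w i * x i

section WeightedHomog

variable {w : Fin n → ℕ}

theorem IsWeightedHomog.eval_weightedScale {g : MvPolynomial (Fin n) ℝ} {e : ℕ}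
    (hg : IsWeightedHomog g w e) (t : ℝ) (x : Fin n → ℝ) :
    eval (weightedScale w t x) g = t ^ e * eval x g := by
  rw [eval_eq', eval_eq', Finset.mul_sum]
  refine Finset.sum_congr rfl fun α hα => ?_
  simp_rw [weightedScale, mul_pow, ← pow_mul, Finset.prod_mul_distrib, Finset.prod_pow_eq_pow_sum]
  rw [← hg α hα]
  simp_rw [mul_comm (w _)]
  ring

variable {f : MvPolynomial (Fin n) ℝ} {d : ℕ}

theorem IsWeightedHomog.weight_add_eq_of_mem_support_pderiv (hf : IsWeightedHomog f w d)
    {j : Fin n} {α : Fin n →₀ ℕ} (hα : α ∈ (pderiv j f).support) :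
    ∑ i, α i * w i + w j = d := by
  rw [mem_support_iff, coeff_pderiv] at hα
  have := hf _ (mem_support_iff.mpr (left_ne_zero_of_mul hα))
  simpa [add_mul, Finset.sum_add_distrib, Finsupp.single_apply] using this

theorem IsWeightedHomog.isWeightedHomog_pderiv (hf : IsWeightedHomog f w d) (j : Fin n) :
    IsWeightedHomog (pderiv j f) w (d - w j) := fun _ hα => by
  have := hf.weight_add_eq_of_mem_support_pderiv hα
  omega

theorem IsWeightedHomog.le_of_pderiv_ne_zero (hf : IsWeightedHomog f w d) {j : Fin n}
    (h : pderiv j f ≠ 0) : w j ≤ d := by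
  obtain ⟨α, hα⟩ := support_nonempty.mpr h
  have := hf.weight_add_eq_of_mem_support_pderiv hα
  omega

theorem IsWeightedHomog.eval_pderiv_weightedScale (hf : IsWeightedHomog f w d) (j : Fin n)
    (t : ℝ) (x : Fin n → ℝ) :
    eval (weightedScale w t x) (pderiv j f) = t ^ ((d : ℝ) - w j) * eval x (pderiv j f) := by
  by_cases h : pderiv j f = 0
  · simp [h]
  rw [(hf.isWeightedHomog_pderiv j).eval_weightedScale, ← Real.rpow_natCast,
    Nat.cast_sub (hf.le_of_pderiv_ne_zero h)]

end WeightedHomog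

section WeightedRadius

variable {w : Fin n → ℕ}

theorem rho_nonneg (x : Fin n → ℝ) : 0 ≤ rho w x := Real.sqrt_nonneg _

theorem continuous_rho : Continuous (rho w) := by
  unfold rho
  exact (continuous_finsetSum _ fun i _ =>
    (Real.continuous_rpow_const (by positivity)).comp (continuous_apply i).abs).sqrt

theorem rho_pos {x : Fin n → ℝ} (hx : x ≠ 0) : 0 < rho w x := by
  obtain ⟨j, hj⟩ := Function.ne_iff.mp hx
  refine Real.sqrt_pos.mpr (Finset.sum_pos' (fun i _ => by positivity) ⟨j, Finset.mem_univ j, ?_⟩)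
  exact Real.rpow_pos_of_pos (abs_pos.mpr hj) _

variable (hw : ∀ i, 0 < w i)
include hw

theorem rho_zero : rho w 0 = 0 := by
  simp [rho, Real.zero_rpow, (hw _).ne']

theorem rho_weightedScale {t : ℝ} (ht : 0 ≤ t) (x : Fin n → ℝ) :
    rho w (weightedScale w t x) = t * rho w x := by
  have key : ∀ i, |weightedScale w t x i| ^ ((2 : ℝ) / w i) = t ^ 2 * |x i| ^ ((2 : ℝ) / w i) := by
    intro i
    have hwi : (w i : ℝ) ≠ 0 := by exact_mod_cast (hw i).ne'
    rw [weightedScale, abs_mul, Real.mul_rpow (abs_nonneg _) (abs_nonneg _), abs_pow,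
      abs_of_nonneg ht, ← Real.rpow_natCast, ← Real.rpow_mul ht, mul_div_cancel₀ _ hwi,
      Real.rpow_two]
  simp_rw [rho, key, ← Finset.mul_sum, Real.sqrt_mul (sq_nonneg t), Real.sqrt_sq ht]

theorem abs_le_rho_rpow (x : Fin n → ℝ) (i : Fin n) : |x i| ≤ rho w x ^ (w i : ℝ) := by
  have hwi : (0 : ℝ) < w i := by exact_mod_cast hw i
  have hsq : |x i| ^ ((2 : ℝ) / w i) ≤ rho w x ^ (2 : ℝ) := by
    rw [Real.rpow_two, rho, Real.sq_sqrt (by positivity)]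
    exact Finset.single_le_sum (f := fun k => |x k| ^ ((2 : ℝ) / w k)) (fun k _ => by positivity)
      (Finset.mem_univ i)
  calc |x i| = (|x i| ^ ((2 : ℝ) / w i)) ^ ((w i : ℝ) / 2) := by
        rw [← Real.rpow_mul (abs_nonneg _), show (2 : ℝ) / w i * (w i / 2) = 1 by field_simp,
          Real.rpow_one]
    _ ≤ (rho w x ^ (2 : ℝ)) ^ ((w i : ℝ) / 2) := by gcongr
    _ = rho w x ^ (w i : ℝ) := by
        rw [← Real.rpow_mul (rho_nonneg x), mul_div_cancel₀ _ two_ne_zero]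

theorem abs_le_one_of_rho_eq_one {u : Fin n → ℝ} (hu : rho w u = 1) (i : Fin n) : |u i| ≤ 1 := by
  simpa [hu] using abs_le_rho_rpow hw u i

theorem exists_rho_eq_one_eq_weightedScale {x : Fin n → ℝ} (hx : x ≠ 0) :
    ∃ u, rho w u = 1 ∧ x = weightedScale w (rho w x) u := by
  have ht : 0 < rho w x := rho_pos hx
  refine ⟨weightedScale w (rho w x)⁻¹ x, ?_, ?_⟩
  · rw [rho_weightedScale hw (inv_nonneg.mpr ht.le), inv_mul_cancel₀ ht.ne']
  · ext i
    simp [weightedScale, ht.ne']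

theorem isCompact_rho_eq_one : IsCompact {u : Fin n → ℝ | rho w u = 1} := by
  refine (isCompact_closedBall (0 : Fin n → ℝ) 1).of_isClosed_subset
    (isClosed_eq continuous_rho continuous_const) fun u hu => ?_
  rw [Metric.mem_closedBall, dist_zero_right, pi_norm_le_iff_of_nonneg zero_le_one]
  exact abs_le_one_of_rho_eq_one hw hu

theorem exists_pos_le_of_rho_eq_one {φ : (Fin n → ℝ) → ℝ} (hφ : Continuous φ)
    (hpos : ∀ u, rho w u = 1 → 0 < φ u) : ∃ c > 0, ∀ u, rho w u = 1 → c ≤ φ u :=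
  (isCompact_rho_eq_one hw).exists_forall_le' hφ.continuousOn hpos

theorem rho_lt_one_mem_nhds : {x : Fin n → ℝ | rho w x < 1} ∈ 𝓝 0 :=
  continuous_rho.continuousAt.preimage_mem_nhds (by rw [rho_zero hw]; exact Iio_mem_nhds one_pos)

theorem tendsto_weightedScale (x : Fin n → ℝ) :
    Tendsto (fun t => weightedScale w t x) (𝓝[>] 0) (𝓝 0) := by
  have hc : Continuous fun t => weightedScale w t x := by unfold weightedScale; fun_prop
  have h0 : weightedScale w 0 x = 0 := by ext i; simp [weightedScale, (hw i).ne']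
  exact (h0 ▸ hc.tendsto 0).mono_left nhdsWithin_le_nhds

theorem exists_weightedScale_mem {U : Set (Fin n → ℝ)} (hU : U ∈ 𝓝 0) (x : Fin n → ℝ) :
    ∃ t > 0, weightedScale w t x ∈ U :=
  (((tendsto_weightedScale hw x).eventually hU).and self_mem_nhdsWithin).exists.imp
    fun _ ⟨h, ht⟩ => ⟨ht, h⟩

end WeightedRadius

theorem weightedScale_apply_eq_zero_iff {w : Fin n → ℕ} {t : ℝ} (ht : t ≠ 0) {x : Fin n → ℝ}
    {i : Fin n} : weightedScale w t x i = 0 ↔ x i = 0 := by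
  simp [weightedScale, ht]

section Nondegenerate

variable {w : Fin n → ℕ} {f : MvPolynomial (Fin n) ℝ} {d : ℕ}

theorem IsWeightedHomog.apply_eq_zero_of_eval_eq_zero (hw : ∀ i, 0 < w i)
    {g : MvPolynomial (Fin n) ℝ} {e : ℕ} (hg : IsWeightedHomog g w e) {U : Set (Fin n → ℝ)}
    (hU : U ∈ 𝓝 0) {j : Fin n} (h : ∀ x ∈ U, eval x g = 0 → x j = 0) {x : Fin n → ℝ}
    (hx : eval x g = 0) : x j = 0 := by
  obtain ⟨t, ht, htx⟩ := exists_weightedScale_mem hw hU x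
  exact (weightedScale_apply_eq_zero_iff ht.ne').mp
    (h _ htx (by rw [hg.eval_weightedScale, hx, mul_zero]))

variable (hw : ∀ i, 0 < w i) (hf : IsWeightedHomog f w d) (hnd : Nondeg f)
include hw hf hnd

theorem Nondeg.eq_zero_of_forall_eval_pderiv_eq_zero {x : Fin n → ℝ}
    (h : ∀ i, eval x (pderiv i f) = 0) : x = 0 := by
  obtain ⟨U, hU, hzero⟩ := hnd
  obtain ⟨t, ht, htx⟩ := exists_weightedScale_mem hw hU x
  have := hzero _ htx fun i => by rw [hf.eval_pderiv_weightedScale, h i, mul_zero]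
  ext i
  exact (weightedScale_apply_eq_zero_iff ht.ne').mp (congrFun this i)

theorem Nondeg.exists_eval_pderiv_ne_zero {x : Fin n → ℝ} (hx : x ≠ 0) :
    ∃ i, eval x (pderiv i f) ≠ 0 := by
  by_contra! h
  exact hx (hnd.eq_zero_of_forall_eval_pderiv_eq_zero hw hf h)

theorem Nondeg.gradNorm_pos {x : Fin n → ℝ} (hx : x ≠ 0) : 0 < gradNorm f x := by
  obtain ⟨i, hi⟩ := hnd.exists_eval_pderiv_ne_zero hw hf hx
  exact (abs_pos.mpr hi).trans_le (abs_eval_pderiv_le_gradNorm f x i)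

theorem Nondeg.weight_le {j : Fin n} (hmin : ∀ i, w j ≤ w i) : w j ≤ d := by
  obtain ⟨i, hi⟩ := hnd.exists_eval_pderiv_ne_zero hw hf
    (Pi.single_ne_zero_iff.mpr one_ne_zero : (Pi.single j 1 : Fin n → ℝ) ≠ 0)
  exact (hmin i).trans (hf.le_of_pderiv_ne_zero fun h => hi (by simp [h]))

omit hw hnd in
theorem IsWeightedHomog.rpow_mul_gradNorm_le_gradNorm_weightedScale {j : Fin n}
    (hmin : ∀ i, w j ≤ w i) {t : ℝ} (ht0 : 0 < t) (ht1 : t ≤ 1) (u : Fin n → ℝ) :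
    t ^ ((d : ℝ) - w j) * gradNorm f u ≤ gradNorm f (weightedScale w t u) := by
  have hpos : 0 < t ^ ((d : ℝ) - w j) := Real.rpow_pos_of_pos ht0 _
  unfold gradNorm
  simp_rw [hf.eval_pderiv_weightedScale]
  calc t ^ ((d : ℝ) - w j) * √(∑ i, eval u (pderiv i f) ^ 2)
      = √(∑ i, (t ^ ((d : ℝ) - w j)) ^ 2 * eval u (pderiv i f) ^ 2) := by
        rw [← Finset.mul_sum, Real.sqrt_mul (sq_nonneg _), Real.sqrt_sq hpos.le]
    _ ≤ √(∑ i, (t ^ ((d : ℝ) - w i) * eval u (pderiv i f)) ^ 2) := by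
        gcongr with i
        rw [mul_pow]
        refine mul_le_mul_of_nonneg_right (pow_le_pow_left₀ hpos.le ?_ 2) (sq_nonneg _)
        exact Real.rpow_le_rpow_of_exponent_ge ht0 ht1
          (sub_le_sub_left (by exact_mod_cast hmin i) _)

omit hw hnd in
theorem IsWeightedHomog.gradNorm_weightedScale_le {t : ℝ} (ht : 0 < t) (u : Fin n → ℝ) :
    gradNorm f (weightedScale w t u) ≤ ∑ i, t ^ ((d : ℝ) - w i) * |eval u (pderiv i f)| := by
  refine (gradNorm_le_sum_abs f _).trans_eq (Finset.sum_congr rfl fun i _ => ?_)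
  rw [hf.eval_pderiv_weightedScale, abs_mul, abs_of_pos (Real.rpow_pos_of_pos ht _)]

theorem Nondeg.exists_le_gradNorm {j : Fin n} (hmin : ∀ i, w j ≤ w i) :
    ∃ c > 0, ∀ x ≠ 0, rho w x ≤ 1 → c * rho w x ^ ((d : ℝ) - w j) ≤ gradNorm f x := by
  obtain ⟨c, hc, hcu⟩ := exists_pos_le_of_rho_eq_one hw (continuous_gradNorm f) fun u hu =>
    hnd.gradNorm_pos hw hf fun h => by simp [h, rho_zero hw] at hu
  refine ⟨c, hc, fun x hx hx1 => ?_⟩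
  obtain ⟨u, hu, hxu⟩ := exists_rho_eq_one_eq_weightedScale hw hx
  calc c * rho w x ^ ((d : ℝ) - w j) ≤ rho w x ^ ((d : ℝ) - w j) * gradNorm f u := by
        rw [mul_comm]
        exact mul_le_mul_of_nonneg_left (hcu u hu) (Real.rpow_nonneg (rho_nonneg x) _)
    _ ≤ gradNorm f x := by
        conv_rhs => rw [hxu]
        exact hf.rpow_mul_gradNorm_le_gradNorm_weightedScale hmin (rho_pos hx) hx1 u

end Nondegenerate

section Lojasiewicz

variable {f : MvPolynomial (Fin n) ℝ}

theorem lojExp_eq_of_forall {L : ℝ} (hL : 0 ≤ L) (hup : ∀ lam, L < lam → LojIneq f lam)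
    (hlow : ∀ lam, 0 < lam → LojIneq f lam → L ≤ lam) : lojExp f = L :=
  csInf_eq_of_forall_ge_of_forall_gt_exists_lt ⟨L + 1, by linarith, hup _ (by linarith)⟩
    (fun lam h => hlow lam h.1 h.2)
    fun lam hlam => ⟨(L + lam) / 2, ⟨by linarith, hup _ (by linarith)⟩, by linarith⟩

theorem lojIneq_of_forall_ne_zero {L lam c : ℝ} {U : Set (Fin n → ℝ)} (hL : 0 ≤ L)
    (hlam : L < lam) (hc : 0 < c) (hU : U ∈ 𝓝 0)
    (h : ∀ x ∈ U, x ≠ 0 → c * eNorm x ^ L ≤ gradNorm f x) : LojIneq f lam := by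
  have he : eNorm (0 : Fin n → ℝ) = 0 := by simp [eNorm]
  have hU' : U ∩ {x | eNorm x < 1} ∈ 𝓝 0 :=
    Filter.inter_mem hU (continuous_eNorm.continuousAt.preimage_mem_nhds
      (by rw [he]; exact Iio_mem_nhds one_pos))
  refine ⟨c, hc, _, hU', fun x ⟨hxU, hx1⟩ => ?_⟩
  rcases eq_or_ne x 0 with rfl | hx
  · rw [he, Real.zero_rpow (hL.trans_lt hlam).ne', mul_zero]
    exact Real.sqrt_nonneg _
  calc c * eNorm x ^ lam ≤ c * eNorm x ^ L := mul_le_mul_of_nonneg_left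
        (Real.rpow_le_rpow_of_exponent_ge' (Real.sqrt_nonneg _) hx1.le hL hlam.le) hc.le
    _ ≤ gradNorm f x := h x hxU hx

theorem lojIneq_of_forall_abs_rpow_le [NeZero n] {L lam c : ℝ} {U : Set (Fin n → ℝ)} (hL : 0 ≤ L)
    (hlam : L < lam) (hc : 0 < c) (hU : U ∈ 𝓝 0)
    (h : ∀ x ∈ U, x ≠ 0 → ∀ i, c * |x i| ^ L ≤ gradNorm f x) : LojIneq f lam := by
  have hn : (0 : ℝ) < n := Nat.cast_pos.mpr (NeZero.pos n)
  refine lojIneq_of_forall_ne_zero hL hlam (by positivity : 0 < c / n ^ L) hU fun x hxU hx => ?_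
  obtain ⟨k, -, hk⟩ := Finset.univ.exists_max_image (fun i => |x i|) Finset.univ_nonempty
  have hnorm : eNorm x ≤ n * |x k| := sqrt_sum_sq_le_card_mul fun i => hk i (Finset.mem_univ i)
  calc c / n ^ L * eNorm x ^ L ≤ c / n ^ L * (n * |x k|) ^ L := by
        gcongr
        exact Real.sqrt_nonneg _
    _ = c * |x k| ^ L := by
        rw [Real.mul_rpow hn.le (abs_nonneg _)]
        field_simp
    _ ≤ gradNorm f x := h x hxU hx k

end Lojasiewicz

section Exponent

variable {w : Fin n → ℕ} {f : MvPolynomial (Fin n) ℝ} {d : ℕ} (hw : ∀ i, 0 < w i)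
include hw

theorem le_mul_of_lojIneq {u : Fin n → ℝ} {j : Fin n} (hu : u j ≠ 0) {K m lam : ℝ}
    (hcurve : ∀ t, 0 < t → t ≤ 1 → gradNorm f (weightedScale w t u) ≤ K * t ^ m)
    (hlam : 0 < lam) (hLI : LojIneq f lam) : m ≤ w j * lam := by
  obtain ⟨C, hC, U, hU, hineq⟩ := hLI
  by_contra! hlt
  set e := m - w j * lam
  have he : 0 < e := sub_pos.mpr hlt
  have hbound : ∀ᶠ t in 𝓝[>] 0, C * |u j| ^ lam ≤ K * t ^ e := by
    filter_upwards [(tendsto_weightedScale hw u).eventually hU, self_mem_nhdsWithin,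
      Ioo_mem_nhdsGT one_pos] with t htU (ht0 : 0 < t) ht1
    have hcoord : |weightedScale w t u j| = t ^ (w j : ℝ) * |u j| := by
      rw [weightedScale, abs_mul, abs_pow, abs_of_pos ht0, Real.rpow_natCast]
    have hpow : 0 < t ^ (w j * lam) := Real.rpow_pos_of_pos ht0 _
    refine le_of_mul_le_mul_right ?_ hpow
    calc C * |u j| ^ lam * t ^ (w j * lam)
        = C * |weightedScale w t u j| ^ lam := by
          rw [hcoord, Real.mul_rpow (by positivity) (abs_nonneg _), ← Real.rpow_mul ht0.le]
          ring
      _ ≤ C * eNorm (weightedScale w t u) ^ lam := by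
          gcongr
          exact abs_le_eNorm _ j
      _ ≤ K * t ^ m := (hineq _ htU).trans (hcurve t ht0 ht1.2.le)
      _ = K * t ^ e * t ^ (w j * lam) := by
          rw [mul_assoc, ← Real.rpow_add ht0, sub_add_cancel]
  have hlim : Tendsto (fun t : ℝ => K * t ^ e) (𝓝[>] 0) (𝓝 0) := by
    have := (Real.continuousAt_rpow_const 0 e (Or.inr he.le)).tendsto.const_mul K
    simpa [Real.zero_rpow he.ne'] using this.mono_left (nhdsWithin_le_nhds (s := Set.Ioi 0))
  have := ge_of_tendsto hlim hbound
  have : 0 < C * |u j| ^ lam := mul_pos hC (Real.rpow_pos_of_pos (abs_pos.mpr hu) _)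
  linarith

theorem sub_div_le_of_lojIneq (hf : IsWeightedHomog f w d) {k : Fin n} (hmax : ∀ i, w i ≤ w k)
    (j : Fin n) {lam : ℝ} (hlam : 0 < lam) (hLI : LojIneq f lam) :
    ((d : ℝ) - w k) / w j ≤ lam := by
  have hwj : (0 : ℝ) < w j := by exact_mod_cast hw j
  set u : Fin n → ℝ := Pi.single j 1
  rw [div_le_iff₀ hwj, mul_comm]
  refine le_mul_of_lojIneq hw (u := u) (K := ∑ i, |eval u (pderiv i f)|) (by simp [u])
    (fun t ht0 ht1 => ?_) hlam hLI
  calc gradNorm f (weightedScale w t u)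
      ≤ ∑ i, t ^ ((d : ℝ) - w i) * |eval u (pderiv i f)| := hf.gradNorm_weightedScale_le ht0 u
    _ ≤ ∑ i, t ^ ((d : ℝ) - w k) * |eval u (pderiv i f)| :=
        Finset.sum_le_sum fun i _ => mul_le_mul_of_nonneg_right (Real.rpow_le_rpow_of_exponent_ge
          ht0 ht1 (sub_le_sub_left (Nat.cast_le.mpr (hmax i)) _)) (abs_nonneg _)
    _ = (∑ i, |eval u (pderiv i f)|) * t ^ ((d : ℝ) - w k) := by
        rw [Finset.sum_mul]
        simp_rw [mul_comm]

theorem Nondeg.div_weight_sub_one_nonneg (hf : IsWeightedHomog f w d) (hnd : Nondeg f)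
    {j : Fin n} (hmin : ∀ i, w j ≤ w i) : 0 ≤ (d : ℝ) / w j - 1 := by
  rw [sub_nonneg, one_le_div (by exact_mod_cast hw j)]
  exact_mod_cast hnd.weight_le hw hf hmin

theorem lojIneq_of_div_sub_one_lt (hf : IsWeightedHomog f w d) (hnd : Nondeg f) {j : Fin n}
    (hmin : ∀ i, w j ≤ w i) {lam : ℝ} (hlam : (d : ℝ) / w j - 1 < lam) : LojIneq f lam := by
  have : NeZero n := ⟨(Fin.pos j).ne'⟩
  have hL := hnd.div_weight_sub_one_nonneg hw hf hmin
  have hwj : (w j : ℝ) ≠ 0 := by exact_mod_cast (hw j).ne'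
  obtain ⟨c, hc, hbound⟩ := hnd.exists_le_gradNorm hw hf hmin
  refine lojIneq_of_forall_abs_rpow_le hL hlam hc (rho_lt_one_mem_nhds hw) fun x hx hx0 i => ?_
  have hxi : |x i| ≤ rho w x ^ (w j : ℝ) := (abs_le_rho_rpow hw x i).trans
    (Real.rpow_le_rpow_of_exponent_ge (rho_pos hx0) (le_of_lt hx) (by exact_mod_cast hmin i))
  calc c * |x i| ^ ((d : ℝ) / w j - 1)
      ≤ c * (rho w x ^ (w j : ℝ)) ^ ((d : ℝ) / w j - 1) := by
        gcongr
    _ = c * rho w x ^ ((d : ℝ) - w j) := by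
        rw [← Real.rpow_mul (rho_nonneg x)]
        congr 2
        field_simp
    _ ≤ gradNorm f x := hbound x hx0 (le_of_lt hx)

end Exponent

theorem ne_zero_of_forall_eval_eq_zero_imp {g : MvPolynomial (Fin n) ℝ} {j : Fin n}
    (h : ∀ x, eval x g = 0 → x j = 0) : g ≠ 0 := fun hg => by
  simpa using h (Pi.single j 1) (by simp [hg])

section Plane

variable {w : Fin 2 → ℕ} {f : MvPolynomial (Fin 2) ℝ} {d : ℕ} (hw : ∀ i, 0 < w i)
include hw

theorem IsWeightedHomog.eq_of_apply_one_eq {g : MvPolynomial (Fin 2) ℝ} {D : ℕ}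
    (hg : IsWeightedHomog g w D) {α β : Fin 2 →₀ ℕ} (hα : α ∈ g.support) (hβ : β ∈ g.support)
    (h : α 1 = β 1) : α = β := by
  have hα' := hg α hα
  have hβ' := hg β hβ
  rw [Fin.sum_univ_two] at hα' hβ'
  have h0 : α 0 = β 0 := Nat.eq_of_mul_eq_mul_right (hw 0) (by rw [h] at hα'; omega)
  ext i
  fin_cases i
  exacts [h0, h]

theorem IsWeightedHomog.exists_eval_eq_pow_mul {g : MvPolynomial (Fin 2) ℝ} {D : ℕ}
    (hg : IsWeightedHomog g w D) (hg0 : g ≠ 0) :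
    ∃ a : ℕ, a * w 1 ≤ D ∧ ∃ R : (Fin 2 → ℝ) → ℝ, Continuous R ∧
      (∀ u, eval u g = u 1 ^ a * R u) ∧ ∀ u, u 0 ≠ 0 → u 1 = 0 → R u ≠ 0 := by
  obtain ⟨α₀, hα₀, hmin⟩ :=
    g.support.exists_min_image (fun α => α 1) (support_nonempty.mpr hg0)
  refine ⟨α₀ 1, ?_, fun u => ∑ α ∈ g.support, coeff α g * (u 0 ^ α 0 * u 1 ^ (α 1 - α₀ 1)),
    by fun_prop, fun u => ?_, fun u hu0 hu1 => ?_⟩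
  · have := hg α₀ hα₀
    rw [Fin.sum_univ_two] at this
    omega
  · rw [eval_eq', Finset.mul_sum]
    refine Finset.sum_congr rfl fun α hα => ?_
    rw [Fin.prod_univ_two, ← pow_mul_pow_sub (u 1) (hmin α hα)]
    ring
  · dsimp only
    rw [Finset.sum_eq_single_of_mem α₀ hα₀ fun β hβ hne => ?_]
    · simpa [hu1] using ⟨mem_support_iff.mp hα₀, fun h => absurd h hu0⟩
    · have hlt : α₀ 1 < β 1 :=
        (hmin β hβ).lt_of_ne fun h => hne (hg.eq_of_apply_one_eq hw hβ hα₀ h.symm)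
      simp [hu1, Nat.sub_ne_zero_of_lt hlt]

theorem IsWeightedHomog.exists_mul_rpow_le_abs_eval_of_rho_eq_one {g : MvPolynomial (Fin 2) ℝ}
    {D : ℕ} (hg : IsWeightedHomog g w D) (hzero : ∀ x, eval x g = 0 → x 1 = 0) :
    ∃ c > 0, ∀ u, rho w u = 1 → c * |u 1| ^ ((D : ℝ) / w 1) ≤ |eval u g| := by
  obtain ⟨a, ha, R, hR, hgR, hR0⟩ :=
    hg.exists_eval_eq_pow_mul hw (ne_zero_of_forall_eval_eq_zero_imp hzero)
  obtain ⟨c, hc, hcR⟩ := exists_pos_le_of_rho_eq_one hw hR.abs fun u hu => abs_pos.mpr <| by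
    by_cases hu1 : u 1 = 0
    · refine hR0 u (fun hu0 => ?_) hu1
      have : u = 0 := by ext i; fin_cases i <;> simp [hu0, hu1]
      simp [this, rho_zero hw] at hu
    · exact fun h => hu1 (hzero u (by rw [hgR, h, mul_zero]))
  refine ⟨c, hc, fun u hu => ?_⟩
  have haD : (a : ℝ) ≤ D / w 1 := by
    rw [le_div_iff₀ (by exact_mod_cast hw 1)]
    exact_mod_cast ha
  calc c * |u 1| ^ ((D : ℝ) / w 1) ≤ c * |u 1| ^ (a : ℝ) :=
        mul_le_mul_of_nonneg_left (Real.rpow_le_rpow_of_exponent_ge' (abs_nonneg _)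
          (abs_le_one_of_rho_eq_one hw hu 1) (Nat.cast_nonneg a) haD) hc.le
    _ ≤ |u 1| ^ a * |R u| := by
        rw [Real.rpow_natCast, mul_comm]
        exact mul_le_mul_of_nonneg_left (hcR u hu) (by positivity)
    _ = |eval u g| := by rw [hgR, abs_mul, abs_pow]

theorem IsWeightedHomog.exists_mul_rpow_le_abs_eval {g : MvPolynomial (Fin 2) ℝ} {D : ℕ}
    (hg : IsWeightedHomog g w D) (hzero : ∀ x, eval x g = 0 → x 1 = 0) :
    ∃ c > 0, ∀ x ≠ 0, c * |x 1| ^ ((D : ℝ) / w 1) ≤ |eval x g| := by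
  obtain ⟨c, hc, hcu⟩ := hg.exists_mul_rpow_le_abs_eval_of_rho_eq_one hw hzero
  refine ⟨c, hc, fun x hx => ?_⟩
  obtain ⟨u, hu, hxu⟩ := exists_rho_eq_one_eq_weightedScale hw hx
  have ht : 0 < rho w x := rho_pos hx
  set t := rho w x
  have hx1 : |x 1| ^ ((D : ℝ) / w 1) = t ^ (D : ℝ) * |u 1| ^ ((D : ℝ) / w 1) := by
    rw [hxu, weightedScale, abs_mul, abs_pow, abs_of_pos ht,
      Real.mul_rpow (by positivity) (abs_nonneg _), ← Real.rpow_natCast, ← Real.rpow_mul ht.le,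
      mul_div_cancel₀ _ (by exact_mod_cast (hw 1).ne')]
  have hgx : |eval x g| = t ^ (D : ℝ) * |eval u g| := by
    rw [hxu, hg.eval_weightedScale, abs_mul, abs_pow, abs_of_pos ht, Real.rpow_natCast]
  rw [hx1, hgx, mul_left_comm]
  exact mul_le_mul_of_nonneg_left (hcu u hu) (by positivity)

omit hw in
theorem IsWeightedHomog.eq_or_add_le_of_pderiv_ne_zero (hf : IsWeightedHomog f w d)
    (hw10 : w 1 ≤ w 0) (hP : pderiv 0 f ≠ 0) : d = w 0 ∨ w 0 + w 1 ≤ d := by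
  obtain ⟨α, hα⟩ := support_nonempty.mpr hP
  have := hf.weight_add_eq_of_mem_support_pderiv hα
  rw [Fin.sum_univ_two] at this
  rcases Nat.eq_zero_or_pos (α 0) with h0 | h0 <;> rcases Nat.eq_zero_or_pos (α 1) with h1 | h1
  · left; simp_all
  all_goals right; nlinarith

theorem exists_mul_abs_rpow_le_gradNorm (hw10 : w 1 ≤ w 0) (hf : IsWeightedHomog f w d)
    (hnd : Nondeg f) (hzero : ∀ x, eval x (pderiv 0 f) = 0 → x 1 = 0) :
    ∃ c > 0, ∀ x ≠ 0, rho w x ≤ 1 → ∀ i, c * |x i| ^ (((d : ℝ) - w 0) / w 1) ≤ gradNorm f x := by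
  have hP := ne_zero_of_forall_eval_eq_zero_imp hzero
  obtain ⟨cA, hcA, hA⟩ := (hf.isWeightedHomog_pderiv 0).exists_mul_rpow_le_abs_eval hw hzero
  simp only [Nat.cast_sub (hf.le_of_pderiv_ne_zero hP)] at hA
  have hA' : ∀ x ≠ 0, cA * |x 1| ^ (((d : ℝ) - w 0) / w 1) ≤ gradNorm f x := fun x hx =>
    (hA x hx).trans (abs_eval_pderiv_le_gradNorm f x 0)
  rcases hf.eq_or_add_le_of_pderiv_ne_zero hw10 hP with hd | hd
  · refine ⟨cA, hcA, fun x hx _ i => ?_⟩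
    simpa [hd] using hA' x hx
  have hmin : ∀ i, w 1 ≤ w i := fun i => by fin_cases i <;> simp [hw10]
  obtain ⟨cB, hcB, hB⟩ := hnd.exists_le_gradNorm hw hf hmin
  have hL : 0 ≤ ((d : ℝ) - w 0) / w 1 :=
    div_nonneg (sub_nonneg.mpr (by exact_mod_cast (by omega : w 0 ≤ d))) (Nat.cast_nonneg _)
  -- `w 1 * (d - w 1) ≤ w 0 * (d - w 0)` because `(w 0 - w 1) * (d - w 0 - w 1) ≥ 0`
  have hexp : (d : ℝ) - w 1 ≤ w 0 * (((d : ℝ) - w 0) / w 1) := by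
    have hw10' : (w 1 : ℝ) ≤ w 0 := by exact_mod_cast hw10
    have hd' : (w 0 : ℝ) + w 1 ≤ d := by exact_mod_cast hd
    rw [mul_div_assoc', le_div_iff₀ (by exact_mod_cast hw 1)]
    nlinarith [mul_nonneg (sub_nonneg.mpr hw10') (sub_nonneg.mpr hd')]
  refine ⟨min cA cB, lt_min hcA hcB, fun x hx hx1 i => ?_⟩
  fin_cases i
  · calc min cA cB * |x 0| ^ (((d : ℝ) - w 0) / w 1)
        ≤ cB * (rho w x ^ (w 0 : ℝ)) ^ (((d : ℝ) - w 0) / w 1) :=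
          mul_le_mul (min_le_right _ _) (Real.rpow_le_rpow (abs_nonneg _)
            (abs_le_rho_rpow hw x 0) hL) (by positivity) hcB.le
      _ ≤ cB * rho w x ^ ((d : ℝ) - w 1) := by
          rw [← Real.rpow_mul (rho_nonneg x)]
          exact mul_le_mul_of_nonneg_left
            (Real.rpow_le_rpow_of_exponent_ge (rho_pos hx) hx1 hexp) hcB.le
      _ ≤ gradNorm f x := hB x hx hx1
  · exact (mul_le_mul_of_nonneg_right (min_le_left _ _) (by positivity)).trans (hA' x hx)

theorem div_sub_one_le_of_lojIneq (hf : IsWeightedHomog f w d)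
    {u : Fin 2 → ℝ} (hPu : eval u (pderiv 0 f) = 0) (hu1 : u 1 ≠ 0) {lam : ℝ} (hlam : 0 < lam)
    (hLI : LojIneq f lam) : (d : ℝ) / w 1 - 1 ≤ lam := by
  rw [sub_le_iff_le_add, div_le_iff₀ (by exact_mod_cast hw 1)]
  have := le_mul_of_lojIneq hw hu1 (K := |eval u (pderiv 1 f)|) (m := (d : ℝ) - w 1)
    (fun t ht0 _ => ?_) hlam hLI
  · linarith
  calc gradNorm f (weightedScale w t u)
      ≤ ∑ i, t ^ ((d : ℝ) - w i) * |eval u (pderiv i f)| := hf.gradNorm_weightedScale_le ht0 u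
    _ = |eval u (pderiv 1 f)| * t ^ ((d : ℝ) - w 1) := by simp [Fin.sum_univ_two, hPu, mul_comm]

theorem lojExp_eq_sub_div_of_eventually (hw10 : w 1 ≤ w 0) (hf : IsWeightedHomog f w d)
    (hnd : Nondeg f) (h : ∃ U ∈ 𝓝 0, ∀ x ∈ U, eval x (pderiv 0 f) = 0 → x 1 = 0) :
    lojExp f = ((d : ℝ) - w 0) / w 1 := by
  obtain ⟨U, hU, hUzero⟩ := h
  have hzero : ∀ x, eval x (pderiv 0 f) = 0 → x 1 = 0 := fun x =>
    (hf.isWeightedHomog_pderiv 0).apply_eq_zero_of_eval_eq_zero hw hU hUzero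
  have hd0 : (w 0 : ℝ) ≤ d := by
    exact_mod_cast hf.le_of_pderiv_ne_zero (ne_zero_of_forall_eval_eq_zero_imp hzero)
  have hL : 0 ≤ ((d : ℝ) - w 0) / w 1 := div_nonneg (sub_nonneg.mpr hd0) (Nat.cast_nonneg _)
  obtain ⟨c, hc, hbound⟩ := exists_mul_abs_rpow_le_gradNorm hw hw10 hf hnd hzero
  refine lojExp_eq_of_forall hL (fun lam hlam => lojIneq_of_forall_abs_rpow_le hL hlam hc
    (rho_lt_one_mem_nhds hw) fun x hx hx0 => hbound x hx0 (le_of_lt hx)) fun lam =>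
    sub_div_le_of_lojIneq hw hf (fun i => by fin_cases i <;> simp [hw10]) 1

theorem lojExp_eq_div_sub_one_of_not_eventually (hw10 : w 1 ≤ w 0) (hf : IsWeightedHomog f w d)
    (hnd : Nondeg f) (h : ¬∃ U ∈ 𝓝 0, ∀ x ∈ U, eval x (pderiv 0 f) = 0 → x 1 = 0) :
    lojExp f = (d : ℝ) / w 1 - 1 := by
  push Not at h
  obtain ⟨u, -, hPu, hu1⟩ := h Set.univ Filter.univ_mem
  have hmin : ∀ i, w 1 ≤ w i := fun i => by fin_cases i <;> simp [hw10]
  exact lojExp_eq_of_forall (hnd.div_weight_sub_one_nonneg hw hf hmin)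
    (fun lam => lojIneq_of_div_sub_one_lt hw hf hnd hmin)
    fun lam => div_sub_one_le_of_lojIneq hw hf hPu hu1

end Plane

theorem stmt0_general (d w₁ w₂ : ℕ) (hw₂ : 0 < w₂) (hw : w₂ ≤ w₁)
    (f : MvPolynomial (Fin 2) ℝ)
    (hhom : IsWeightedHomog f ![w₁, w₂] d)
    (hnd : Nondeg f) :
    ((∃ U ∈ nhds (0 : Fin 2 → ℝ), ∀ x ∈ U,
        eval x (pderiv 0 f) = 0 → x 1 = 0) →
      lojExp f = ((d : ℝ) - w₁) / w₂) ∧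
    ((¬ ∃ U ∈ nhds (0 : Fin 2 → ℝ), ∀ x ∈ U,
        eval x (pderiv 0 f) = 0 → x 1 = 0) →
      lojExp f = (d : ℝ) / w₂ - 1) := by
  have hpos : ∀ i, 0 < ![w₁, w₂] i := fun i => by
    fin_cases i
    exacts [hw₂.trans_le hw, hw₂]
  exact ⟨fun h => by simpa using lojExp_eq_sub_div_of_eventually hpos hw hhom hnd h,
    fun h => by simpa using lojExp_eq_div_sub_one_of_not_eventually hpos hw hhom hnd h⟩

theorem stmt0 (d w₁ w₂ : ℕ) (hd : 0 < d) (hw₂ : 0 < w₂) (hw : w₂ ≤ w₁)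
    (f : MvPolynomial (Fin 2) ℝ)
    (hhom : IsWeightedHomog f ![w₁, w₂] d)
    (hnd : Nondeg f) :
    ((∃ U ∈ nhds (0 : Fin 2 → ℝ), ∀ x ∈ U,
        eval x (pderiv 0 f) = 0 → x 1 = 0) →
      lojExp f = ((d : ℝ) - w₁) / w₂) ∧
    ((¬ ∃ U ∈ nhds (0 : Fin 2 → ℝ), ∀ x ∈ U,
        eval x (pderiv 0 f) = 0 → x 1 = 0) →
      lojExp f = (d : ℝ) / w₂ - 1) :=
  stmt0_general d w₁ w₂ hw₂ hw f hhom hnd
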